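/- Let m, n, t ∈ ℕ, let B be an algebra, and let C be a clonoid with source set A = {1,2,…,t} and target algebra B. Let a ∈ A^m and b ∈ A^n with a ≤_a b. Then Φ(C, b) ⊆ Φ(C, a). -/

import Mathlib

/-!
A witness `h` of `a ≤ₐ b` has a retraction `σ` (sending `h i` back to `i`, and every other
position of `b` to the first occurrence of the same letter in `a`) with `a ∘ σ = b`. Since
`h` preserves first occurrences, every position of `b` before `h i` is sent before `i`, so
`c <lex a` implies `c ∘ σ <lex b`. Composing the two functions of a fork at `b` with `σ`
therefore gives a fork at `a` with the same value.
-/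

open FirstOrder FirstOrder.Language

/-- `C` is a clonoid with source set `S` and target algebra `B`: writing
`C n` for its `n`-ary part (a set of functions `Sⁿ → B`), each `C n` is a
subuniverse of `B^(Sⁿ)` (closed under the componentwise operations of `B`),
and `C` is closed under manipulation (permuting and identifying) of arguments. -/
def IsClonoid (L : FirstOrder.Language) (S B : Type) [L.Structure B]
    (C : ∀ n : ℕ, Set ((Fin n → S) → B)) : Prop :=
  (∀ (n l : ℕ) (f : L.Functions l) (g : Fin l → ((Fin n → S) → B)),
      (∀ i, g i ∈ C n) →
      (fun v : Fin n → S => Structure.funMap f (fun i => g i v)) ∈ C n) ∧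
  (∀ (k n : ℕ) (σ : Fin k → Fin n), ∀ c ∈ C k,
      (fun v : Fin n → S => c (fun i => v (σ i))) ∈ C n)

/-- The strict lexicographic order on tuples `Fin n → Fin t`
(for `A = {1, …, t}` with its natural order). -/
def LtLex {n t : ℕ} (c a : Fin n → Fin t) : Prop :=
  ∃ i : Fin n, (∀ j : Fin n, j < i → c j = a j) ∧ c i < a i

/-- `Φ(C, a)`: the set of forks of `C` at the tuple `a ∈ Aⁿ`, i.e. all pairs
`(f a, g a)` where `f, g` are `n`-ary members of `C` that agree on all tuples
lexicographically smaller than `a`. -/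
def PhiX {B : Type} {t : ℕ}
    (C : ∀ n : ℕ, Set ((Fin n → Fin t) → B)) {n : ℕ} (a : Fin n → Fin t) :
    Set (B × B) :=
  {p | ∃ f ∈ C n, ∃ g ∈ C n,
        (∀ c : Fin n → Fin t, LtLex c a → f c = g c) ∧ p = (f a, g a)}

/-- `h` witnesses `a ≤ₐ b` for tuples `a ∈ Aᵐ`, `b ∈ Aⁿ` over `A = {1, …, t}`:
`h` is injective and increasing, `aᵢ = b_{h i}`, `a` and `b` have the same set of
letters, and `h` maps the first occurrence of each letter of `a` to the first
occurrence of that letter in `b`. -/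
def WitnessesF {t m n : ℕ} (a : Fin m → Fin t) (b : Fin n → Fin t)
    (h : Fin m → Fin n) : Prop :=
  StrictMono h ∧
  (∀ i : Fin m, a i = b (h i)) ∧
  Set.range a = Set.range b ∧
  (∀ i : Fin m, (∀ i' : Fin m, i' < i → a i' ≠ a i) →
    ∀ j : Fin n, j < h i → b j ≠ a i)

theorem phiX_subset_of_minor {B : Type} {t m n : ℕ} {C : ∀ n : ℕ, Set ((Fin n → Fin t) → B)}
    {a : Fin m → Fin t} {b : Fin n → Fin t} (σ : Fin n → Fin m)
    (hC : ∀ f ∈ C n, (fun v => f (v ∘ σ)) ∈ C m) (hab : a ∘ σ = b)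
    (hlex : ∀ c, LtLex c a → LtLex (c ∘ σ) b) :
    PhiX C b ⊆ PhiX C a := by
  rintro _ ⟨f, hf, g, hg, hfg, rfl⟩
  refine ⟨_, hC f hf, _, hC g hg, fun c hc => hfg _ (hlex c hc), ?_⟩
  simp only [hab]

theorem LtLex.comp {t m n : ℕ} {a c : Fin m → Fin t} {b : Fin n → Fin t}
    {σ : Fin n → Fin m} {h : Fin m → Fin n} (hσh : ∀ i, σ (h i) = i) (hab : a ∘ σ = b)
    (hσlt : ∀ i j, j < h i → σ j < i) (hca : LtLex c a) : LtLex (c ∘ σ) b := by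
  obtain ⟨i, hbefore, hlt⟩ := hca
  refine ⟨h i, fun j hj => ?_, ?_⟩
  · rw [← hab, Function.comp_apply, Function.comp_apply, hbefore _ (hσlt i j hj)]
  · rwa [← hab, Function.comp_apply, Function.comp_apply, hσh]

theorem WitnessesF.exists_retraction {t m n : ℕ} {a : Fin m → Fin t} {b : Fin n → Fin t}
    {h : Fin m → Fin n} (hw : WitnessesF a b h) :
    ∃ σ : Fin n → Fin m, (∀ i, σ (h i) = i) ∧ a ∘ σ = b ∧ ∀ i j, j < h i → σ j < i := by
  classical
  obtain ⟨hmono, hab, hrange, hfirst⟩ := hw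
  have hfirstOcc : ∀ j, ∃ i, a i = b j ∧ ∀ i', a i' = b j → ¬ i' < i := fun j =>
    wellFounded_lt.has_min {i | a i = b j} (hrange.ge (Set.mem_range_self j))
  choose F hF hFmin using hfirstOcc
  let σ : Fin n → Fin m := fun j => if hj : j ∈ Set.range h then hj.choose else F j
  have hσh : ∀ i, σ (h i) = i := fun i =>
    (dif_pos (Set.mem_range_self i)).trans (hmono.injective (Set.mem_range_self i).choose_spec)
  refine ⟨σ, hσh, funext fun j => ?_, fun i j hj => ?_⟩
  · by_cases hj : j ∈ Set.range h
    · obtain ⟨i, rfl⟩ := hj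
      rw [Function.comp_apply, hσh, hab]
    · simp only [Function.comp_apply, σ, dif_neg hj, hF]
  · by_cases hj' : j ∈ Set.range h
    · obtain ⟨i', rfl⟩ := hj'
      rwa [hσh, ← hmono.lt_iff_lt]
    · simp only [σ, dif_neg hj']
      by_contra! hle
      have hFfirst : ∀ i' < F j, a i' ≠ a (F j) := fun i' hi' he =>
        hFmin j i' (he.trans (hF j)) hi'
      exact hfirst (F j) hFfirst j (hj.trans_le (hmono.monotone hle)) (hF j).symm

/-- **Lemma (forks decrease along `≤ₐ`).** Let `C` be a clonoid with source set
`A = {1, …, t}` and target algebra `B`, and let `a ∈ Aᵐ`, `b ∈ Aⁿ` with `a ≤ₐ b`.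
Then `Φ(C, b) ⊆ Φ(C, a)`. -/
theorem phiX_antitone
    (L : FirstOrder.Language) (B : Type) [L.Structure B] (t m n : ℕ)
    (C : ∀ n : ℕ, Set ((Fin n → Fin t) → B)) (hC : IsClonoid L (Fin t) B C)
    (a : Fin m → Fin t) (b : Fin n → Fin t)
    (h : Fin m → Fin n) (hw : WitnessesF a b h) :
    PhiX C b ⊆ PhiX C a := by
  obtain ⟨σ, hσh, hab, hσlt⟩ := hw.exists_retraction
  exact phiX_subset_of_minor σ (hC.2 n m σ) hab fun _ => LtLex.comp hσh hab hσlt
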